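/- arXiv:1410.2438 — 7 statements merged into one kernel-verified Lean document; each statement's English description precedes it below -/
import Mathlib

section
/- Under the hypotheses that Y is k-dimensional, Y ⊄ {qⱼ = 0} and Y^⊥ ⊄ {pⱼ = 0} for all j, if I ⊂ {1,…,n} is a k-element subset such that the restrictions of the coordinates {qᵢ : i ∈ I} form a coordinate system on Y (i.e. the projection of Y to the I-coordinates is an isomorphism), then the functions {qᵢ : i ∈ I} ∪ {pⱼ : j ∉ I} form a coordinate system on the n-dimensional variety L_{Y,a}: their differentials are independent at each point of L_{Y,a} and the corresponding projection L_{Y,a} → ℂ^k × (ℂ^×)^{n−k} is injective. -/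
open ContinuousLinearMap in
/-- An annihilator of `Y` vanishing outside `I` vanishes, when the `I`-coordinates of `Y`
are surjective. -/
lemma aux_ann {n : ℕ} {Y : Submodule ℂ (Fin n → ℂ)} {I : Finset (Fin n)}
    (hsurj : Function.Surjective
      (fun (y : Y) (i : {i : Fin n // i ∈ I}) => (y : Fin n → ℂ) i.1))
    (p : Fin n → ℂ) (hann : ∀ y ∈ Y, ∑ j, p j * y j = 0)
    (h0 : ∀ j, j ∉ I → p j = 0) : p = 0 := by
  funext j
  by_cases hj : j ∈ I
  · obtain ⟨y, hy⟩ := hsurj (fun i => if i.1 = j then 1 else 0)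
    have hsum := hann y y.2
    have hterm : ∀ j', p j' * (y : Fin n → ℂ) j' = if j' = j then p j else 0 := by
      intro j'
      by_cases hj' : j' ∈ I
      · have := congrFun hy ⟨j', hj'⟩
        simp only at this
        rw [this]
        by_cases h : j' = j <;> simp [h]
      · rw [h0 j' hj']
        by_cases h : j' = j
        · exact absurd (h ▸ hj) hj'
        · simp [h]
    rw [Finset.sum_congr rfl (fun j' _ => hterm j')] at hsum
    simpa using hsum
  · simp [h0 j hj]

/-- An element of `Y` vanishing on `I` vanishes, when the `I`-coordinates of `Y`
are injective. -/
lemma aux_inj {n : ℕ} {Y : Submodule ℂ (Fin n → ℂ)} {I : Finset (Fin n)}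
    (hinj : Function.Injective
      (fun (y : Y) (i : {i : Fin n // i ∈ I}) => (y : Fin n → ℂ) i.1))
    (v : Fin n → ℂ) (hv : v ∈ Y) (h0 : ∀ i ∈ I, v i = 0) : v = 0 := by
  have : (⟨v, hv⟩ : Y) = 0 := by
    apply hinj
    funext i
    simp [h0 i.1 i.2]
  simpa using congrArg Subtype.val this

/-- If the coordinates `{qᵢ : i ∈ I}` form a coordinate system on `Y`, then
`{qᵢ : i ∈ I} ∪ {pⱼ : j ∉ I}` is a coordinate system on the Lagrangian variety
`L_{Y,a} = r_a(Y × Y^⊥)`: the corresponding projection is injective on `L_{Y,a}`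
and its differential (i.e. the differential of the chart composed with the
parametrization `r_a` of `L_{Y,a}`, restricted to the tangent space `Y × Y^⊥`)
is injective at every point. -/
theorem stmt_3 (n k : ℕ) (a : Fin n → ℂ) (ha : ∀ j, a j ≠ 0)
    (Y : Submodule ℂ (Fin n → ℂ)) (hYdim : Module.finrank ℂ Y = k)
    (hq : ∀ j, ∃ y ∈ Y, y j ≠ 0)
    (hp : ∀ j, ∃ β : Fin n → ℂ, (∀ y ∈ Y, ∑ j', β j' * y j' = 0) ∧ β j ≠ 0)
    (I : Finset (Fin n)) (hI : I.card = k)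
    (hcoord : Function.Bijective (fun (y : Y) (i : {i : Fin n // i ∈ I}) => (y : Fin n → ℂ) i.1))
    (r : (Fin n → ℂ) × (Fin n → ℂ) → (Fin n → ℂ) × (Fin n → ℂ))
    (hr : ∀ z, r z = (fun j => z.1 j + a j / z.2 j, z.2))
    (φ : (Fin n → ℂ) × (Fin n → ℂ) →
      ({i : Fin n // i ∈ I} → ℂ) × ({j : Fin n // j ∉ I} → ℂ))
    (hφ : ∀ z, φ z = (fun i => z.1 i.1, fun j => z.2 j.1))
    (L : Set ((Fin n → ℂ) × (Fin n → ℂ)))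
    (hL : L = {z | ∃ q ∈ Y, ∃ p : Fin n → ℂ, (∀ y ∈ Y, ∑ j, p j * y j = 0) ∧
      (∀ j, p j ≠ 0) ∧ z = (fun j => q j + a j / p j, p)}) :
    Set.InjOn φ L ∧
    (∀ q ∈ Y, ∀ p : Fin n → ℂ, (∀ y ∈ Y, ∑ j, p j * y j = 0) → (∀ j, p j ≠ 0) →
      ∀ vw : (Fin n → ℂ) × (Fin n → ℂ), vw.1 ∈ Y →
        (∀ y ∈ Y, ∑ j, vw.2 j * y j = 0) →
        fderiv ℂ (φ ∘ r) (q, p) vw = 0 → vw = 0) := by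
  constructor
  · -- injectivity on L
    intro z hz z' hz' hφeq
    rw [hL] at hz hz'
    obtain ⟨q, hqY, p, hann, hp0, rfl⟩ := hz
    obtain ⟨q', hqY', p', hann', hp0', rfl⟩ := hz'
    rw [hφ, hφ] at hφeq
    simp only [Prod.mk.injEq] at hφeq
    obtain ⟨h1, h2⟩ := hφeq
    -- second components agree off I, hence p = p'
    have hpp' : p = p' := by
      have hd : p - p' = 0 := by
        apply aux_ann hcoord.surjective
        · intro y hy
          simp only [Pi.sub_apply, sub_mul]
          rw [Finset.sum_sub_distrib, hann y hy, hann' y hy, sub_zero]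
        · intro j hj
          have := congrFun h2 ⟨j, hj⟩
          simpa [sub_eq_zero] using this
      have := sub_eq_zero.mp hd
      exact this
    subst hpp'
    -- first components agree on I, hence q = q'
    have hqq' : q = q' := by
      have hd : q - q' = 0 := by
        apply aux_inj hcoord.injective _ (Y.sub_mem hqY hqY')
        intro i hi
        have := congrFun h1 ⟨i, hi⟩
        simp only at this
        have : q i = q' i := by
          field_simp at this
          linear_combination this
        simp [this]
      exact sub_eq_zero.mp hd
    subst hqq'
    rfl
  · -- differential injectivity
    intro q hqY p hann hp0 vw hvY hwann hder
    -- φ ∘ r as an explicit function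
    have hfun : φ ∘ r = fun z => ((fun i : {i : Fin n // i ∈ I} => z.1 i.1 + a i.1 * (z.2 i.1)⁻¹),
        (fun j : {j : Fin n // j ∉ I} => z.2 j.1)) := by
      funext z
      rw [Function.comp_apply, hr, hφ]
      simp [div_eq_mul_inv]
    -- the candidate derivative
    set P1 : (i : Fin n) → ((Fin n → ℂ) × (Fin n → ℂ)) →L[ℂ] ℂ :=
      fun i => (ContinuousLinearMap.proj i).comp (ContinuousLinearMap.fst ℂ _ _) with hP1
    set P2 : (i : Fin n) → ((Fin n → ℂ) × (Fin n → ℂ)) →L[ℂ] ℂ :=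
      fun i => (ContinuousLinearMap.proj i).comp (ContinuousLinearMap.snd ℂ _ _) with hP2
    set D : ((Fin n → ℂ) × (Fin n → ℂ)) →L[ℂ]
        ({i : Fin n // i ∈ I} → ℂ) × ({j : Fin n // j ∉ I} → ℂ) :=
      (ContinuousLinearMap.pi fun i : {i : Fin n // i ∈ I} =>
        P1 i.1 + a i.1 • ((-(p i.1 ^ 2)⁻¹ : ℂ) • P2 i.1)).prod
      (ContinuousLinearMap.pi fun j : {j : Fin n // j ∉ I} => P2 j.1) with hD
    have hder' : HasFDerivAt (φ ∘ r) D (q, p) := by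
      rw [hfun, hD]
      apply HasFDerivAt.prodMk
      · apply hasFDerivAt_pi.2
        intro i
        have h2 : HasFDerivAt (fun z : (Fin n → ℂ) × (Fin n → ℂ) => z.2 i.1)
            (P2 i.1) (q, p) := (P2 i.1).hasFDerivAt
        have hinv : HasFDerivAt (fun z : (Fin n → ℂ) × (Fin n → ℂ) => (z.2 i.1)⁻¹)
            ((-(p i.1 ^ 2)⁻¹ : ℂ) • P2 i.1) (q, p) :=
          (hasDerivAt_inv (hp0 i.1)).comp_hasFDerivAt (q, p) h2
        have hmul : HasFDerivAt (fun z : (Fin n → ℂ) × (Fin n → ℂ) => a i.1 * (z.2 i.1)⁻¹)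
            (a i.1 • ((-(p i.1 ^ 2)⁻¹ : ℂ) • P2 i.1)) (q, p) := hinv.const_mul (a i.1)
        exact ((P1 i.1).hasFDerivAt).add hmul
      · exact hasFDerivAt_pi.2 fun j => (P2 j.1).hasFDerivAt
    rw [hder'.fderiv] at hder
    -- extract component information
    have hD2 : ∀ j : {j : Fin n // j ∉ I}, vw.2 j.1 = 0 := by
      intro j
      have := congrFun (congrArg Prod.snd hder) j
      simpa [hD, hP2] using this
    have hw0 : vw.2 = 0 := by
      apply aux_ann hcoord.surjective _ hwann
      intro j hj
      exact hD2 ⟨j, hj⟩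
    have hD1 : ∀ i : {i : Fin n // i ∈ I}, vw.1 i.1 = 0 := by
      intro i
      have := congrFun (congrArg Prod.fst hder) i
      simp only [hD, hP1, hP2, ContinuousLinearMap.prod_apply,
        ContinuousLinearMap.pi_apply, ContinuousLinearMap.add_apply,
        ContinuousLinearMap.coe_comp', Function.comp_apply,
        ContinuousLinearMap.coe_fst', ContinuousLinearMap.proj_apply,
        ContinuousLinearMap.smul_apply, ContinuousLinearMap.coe_snd',
        Prod.fst_zero, Pi.zero_apply] at this
      rw [hw0] at this
      simpa using this
    have hv0 : vw.1 = 0 := by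
      apply aux_inj hcoord.injective _ hvY
      intro i hi
      exact hD1 ⟨i, hi⟩
    exact Prod.ext hv0 hw0
end

section
/- Assume for every j that Y^⊥ ⊄ {pⱼ = 0}, and that the critical set C_{A,a} ⊂ U(A) ⊂ ℂ^n × ℂ^k of the master function in the t-direction is nonempty. Then the map Ψ(x,u) = (x, (a₁/f₁(x,u), …, aₙ/fₙ(x,u))) maps C_{A,a} into the Lagrangian variety L_{Y,a}; i.e., for any (x,u) ∈ C_{A,a}, the point p = (aⱼ/fⱼ(x,u))ⱼ satisfies Σⱼ αⱼ pⱼ = 0 for all α ∈ Y and Σⱼ βⱼ(xⱼ − aⱼ/pⱼ) = 0 for all β ∈ Y^⊥. -/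
/-- The subspace `Y = Y(A) ⊂ ℂⁿ` spanned by the rows `bⁱ = (bⁱ₁, …, bⁱₙ)` of the
coefficient matrix of the linear parts `gⱼ(t) = ∑ᵢ bⱼⁱ tᵢ`. -/
noncomputable def rowSpan (n k : ℕ) (b : Fin n → Fin k → ℂ) :
    Submodule ℂ (Fin n → ℂ) :=
  Submodule.span ℂ (Set.range fun i : Fin k => fun j : Fin n => b j i)

/-- The map `Ψ(x,u) = (x, (aⱼ/fⱼ(x,u))ⱼ)` sends the critical set `C_{A,a}` into
the Lagrangian variety `L_{Y,a}`: for a critical point `(x,u)`, the point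
`p = (aⱼ/fⱼ(x,u))ⱼ` has all coordinates nonzero, satisfies `∑ αⱼ pⱼ = 0` for all
`α ∈ Y` and `∑ βⱼ (xⱼ − aⱼ/pⱼ) = 0` for all `β ∈ Y^⊥`. -/
theorem stmt_9 (n k : ℕ) (b : Fin n → Fin k → ℂ) (a : Fin n → ℂ)
    (ha : ∀ j, a j ≠ 0)
    (hperp : ∀ j, ∃ β : Fin n → ℂ,
      (∀ y ∈ rowSpan n k b, ∑ j', β j' * y j' = 0) ∧ β j ≠ 0)
    (x : Fin n → ℂ) (u : Fin k → ℂ) (f p : Fin n → ℂ)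
    (hf : ∀ j, f j = (∑ i, b j i * u i) + x j)
    (hne : ∀ j, f j ≠ 0)
    (hcrit : ∀ i, ∑ j, b j i * (a j / f j) = 0)
    (hp : ∀ j, p j = a j / f j) :
    (∀ j, p j ≠ 0) ∧
    (∀ α ∈ rowSpan n k b, ∑ j, α j * p j = 0) ∧
    (∀ β : Fin n → ℂ, (∀ y ∈ rowSpan n k b, ∑ j, β j * y j = 0) →
      ∑ j, β j * (x j - a j / p j) = 0) := by
  have hpne : ∀ j, p j ≠ 0 := by
    intro j
    rw [hp j]
    exact div_ne_zero (ha j) (hne j)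
  refine ⟨hpne, ?_, ?_⟩
  · intro α hα
    induction hα using Submodule.span_induction with
    | mem y hy =>
      obtain ⟨i, rfl⟩ := hy
      simpa [hp] using hcrit i
    | zero => simp
    | add y z _ _ hy hz =>
      simp only [Pi.add_apply, add_mul, Finset.sum_add_distrib, hy, hz, add_zero]
    | smul c y _ hy =>
      simp only [Pi.smul_apply, smul_eq_mul, mul_assoc, ← Finset.mul_sum, hy, mul_zero]
  · intro β hβ
    have hx : ∀ j, x j - a j / p j = -∑ i, b j i * u i := by
      intro j
      have h1 : a j / p j = f j := by
        rw [hp j]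
        field_simp
        exact mul_div_cancel_left₀ _ (ha j)
      rw [h1, hf j]
      ring
    have hrow : ∀ i, ∑ j, β j * b j i = 0 := by
      intro i
      exact hβ _ (Submodule.subset_span ⟨i, rfl⟩)
    calc ∑ j, β j * (x j - a j / p j) = ∑ j, β j * -∑ i, b j i * u i := by
          simp_rw [hx]
      _ = -∑ i, (∑ j, β j * b j i) * u i := by
          simp_rw [mul_neg, Finset.sum_neg_distrib, neg_inj, Finset.mul_sum,
            Finset.sum_mul, mul_assoc]
          exact Finset.sum_comm
      _ = 0 := by simp [hrow]
end

section
/- If the critical set C_{A,a} = {(x,u) ∈ U(A) : ∂Φ/∂tᵢ(x,u) = 0, i = 1,…,k} is nonempty, then it is a smooth n-dimensional complex submanifold of U(A) ⊂ ℂ^n × ℂ^k: at every point of C_{A,a}, the k×n matrix (∂²Φ/∂zⱼ∂tᵢ) has rank k. -/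
open Matrix

lemma Matrix.rank_eq_card_of_mulVec_eq_zero {m n R : Type*} [Fintype m] [Fintype n] [CommRing R]
    [StrongRankCondition R] {A : Matrix m n R} (hA : ∀ v, A *ᵥ v = 0 → v = 0) :
    A.rank = Fintype.card n := by
  have hinj : Function.Injective A.mulVecLin :=
    LinearMap.ker_eq_bot.mp (ker_mulVecLin_eq_bot_iff.mpr hA)
  rw [rank, LinearMap.finrank_range_of_inj hinj, Module.finrank_fintype_fun_eq_card]

lemma Matrix.rank_transpose_mul_diagonal {m n K : Type*} [Fintype m] [Fintype n] [DecidableEq n]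
    [Field K] (B : Matrix n m K) {d : n → K} (hd : ∀ j, d j ≠ 0) :
    (Bᵀ * diagonal d).rank = B.rank := by
  rw [rank_mul_eq_left_of_det_ne_zero _ _ (by simpa [det_diagonal, Finset.prod_ne_zero_iff]),
    rank_transpose]

theorem stmt_11_general (n k : ℕ) (b : Fin n → Fin k → ℂ) (a : Fin n → ℂ)
    (ha : ∀ j, a j ≠ 0)
    (hspan : ∀ t : Fin k → ℂ, (∀ j, ∑ i, b j i * t i = 0) → t = 0)
    (f : Fin n → ℂ)
    (hne : ∀ j, f j ≠ 0) :
    (Matrix.of fun (i : Fin k) (j : Fin n) => -(b j i * a j / (f j) ^ 2)).rank = k := by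
  have hM : (Matrix.of fun (i : Fin k) (j : Fin n) => -(b j i * a j / (f j) ^ 2)) =
      (Matrix.of b)ᵀ * diagonal fun j => -(a j / f j ^ 2) := by
    ext i j
    simp only [of_apply, mul_diagonal, transpose_apply]
    ring
  have hB : (Matrix.of b).rank = k := by
    rw [rank_eq_card_of_mulVec_eq_zero (A := of b) fun t ht => hspan t fun j => congrFun ht j,
      Fintype.card_fin]
  rw [hM, rank_transpose_mul_diagonal _ fun j => by simp [ha j, hne j], hB]

/-- Smoothness of the critical set: at every point `(x,u)` of the critical set
`C_{A,a}`, the `k × n` matrix `(∂²Φ/∂zⱼ∂tᵢ) = (−bⱼⁱ aⱼ/fⱼ²)` has rank `k`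
(hence, if nonempty, `C_{A,a}` is a smooth `n`-dimensional submanifold of
`U(A) ⊂ ℂⁿ × ℂᵏ`). -/
theorem stmt_11 (n k : ℕ) (b : Fin n → Fin k → ℂ) (a : Fin n → ℂ)
    (ha : ∀ j, a j ≠ 0)
    (hspan : ∀ t : Fin k → ℂ, (∀ j, ∑ i, b j i * t i = 0) → t = 0)
    (x : Fin n → ℂ) (u : Fin k → ℂ) (f : Fin n → ℂ)
    (hf : ∀ j, f j = (∑ i, b j i * u i) + x j)
    (hne : ∀ j, f j ≠ 0)
    (hcrit : ∀ i, ∑ j, b j i * (a j / f j) = 0) :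
    (Matrix.of fun (i : Fin k) (j : Fin n) => -(b j i * a j / (f j) ^ 2)).rank = k :=
  stmt_11_general n k b a ha hspan f hne
end

section
/- For a k-element subset I of {1,…,n} with d_I ≠ 0 and the coordinate system (q_I, p_{Ī}) on L_{Y,a}, the Jacobian Jac_I of the projection π : L_{Y,a} → ℂ^n, (q,p) ↦ q, with respect to coordinates (q_I, p_{Ī}) on the source and (q₁,…,qₙ) on the target, satisfies d_I² · Jac_I = (−1)^{n−k} Σ_{M ⊂ {1,…,n}, |M| = n−k} d_{M̄}² ∏_{j∈M} aⱼ/pⱼ². In particular, d_I² Jac_I is independent of the choice of I. -/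
/-- The annihilator `Y^⊥ ⊂ (ℂⁿ)* ≅ ℂⁿ` of a subspace `Y ⊂ ℂⁿ`. -/
noncomputable def annSub (n : ℕ) (Y : Submodule ℂ (Fin n → ℂ)) :
    Submodule ℂ (Fin n → ℂ) where
  carrier := {β | ∀ y ∈ Y, ∑ j, β j * y j = 0}
  add_mem' := by
    intro β γ hβ hγ y hy
    have h1 := hβ y hy
    have h2 := hγ y hy
    simp only [Pi.add_apply, add_mul]
    rw [Finset.sum_add_distrib, h1, h2, add_zero]
  zero_mem' := by intro y hy; simp
  smul_mem' := by
    intro c β hβ y hy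
    have h1 := hβ y hy
    simp only [Pi.smul_apply, smul_eq_mul, mul_assoc]
    rw [← Finset.mul_sum, h1, mul_zero]

/-!
Let `V`, `W` be the matrices of the two components of `u`, so that `MA = V - D W` with
`D = diag (aⱼ / pⱼ²)`, while `MB` takes its rows in `I` from `MA` and the others from `W`.
Expanding both determinants row by row expresses them through the determinants `R_S` of the
matrices whose rows in `S` come from `V` and the others from `W`. Since the columns of `V` lie in
the `k`-dimensional `Y` and those of `W` in the `(n - k)`-dimensional `Y^⊥`, a rank count kills
`R_S` unless `|S| = k`; in particular only `S = I` survives in `det MB`.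

For `|S| = k`, write `V = B G` and `W = C H` with `B = (b)` and `C` a basis matrix of `Y^⊥`, so
`Bᵀ C = 0`. Then `R_S = det (A_S [G; H])`, where `A_S` has the rows of `[B | 0]` in `S` and those
of `[0 | C]` elsewhere. A column operation gives `det A_S = P_S c_S`, with
`P_S = det [B | E_{Sᶜ}] = ± d_S` and `c_S` the minor of `C` on the rows `Sᶜ`, and the
block-triangular product `[B | E_{Sᶜ}]ᵀ [E_T | C]` gives `P_S Q_T = d_T c_S` with
`Q_T = det [E_T | C]`. Hence `d_T det A_S = P_S² Q_T = d_S² Q_T`, so `d_T R_S = d_S² κ` with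
`κ` independent of `S` (the duality between the Plücker coordinates of `Y` and `Y^⊥`);
substituting this into both expansions gives the formula.
-/

open Matrix Finset

theorem Submodule.finrank_prod {K M N : Type*} [Field K] [AddCommGroup M] [Module K M]
    [AddCommGroup N] [Module K N] [FiniteDimensional K M] [FiniteDimensional K N]
    (p : Submodule K M) (q : Submodule K N) :
    Module.finrank K (p.prod q) = Module.finrank K p + Module.finrank K q := by
  let e : p.prod q ≃ₗ[K] p × q :=
    { toFun x := (⟨x.1.1, x.2.1⟩, ⟨x.1.2, x.2.2⟩)
      invFun y := ⟨(y.1, y.2), y.1.2, y.2.2⟩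
      map_add' _ _ := rfl
      map_smul' _ _ := rfl
      left_inv _ := rfl
      right_inv _ := rfl }
  rw [e.finrank_eq, Module.finrank_prod]

theorem Submodule.exists_matrix_span_col_eq {K ι : Type*} [Field K] [Fintype ι]
    (p : Submodule K (ι → K)) {m : ℕ} (h : Module.finrank K p = m) :
    ∃ C : Matrix ι (Fin m) K, span K (Set.range C.col) = p := by
  let bp := Module.finBasisOfFinrankEq K p h
  refine ⟨of fun i l => (bp l : ι → K) i, ?_⟩
  have : Set.range (of fun i l => (bp l : ι → K) i).col = p.subtype '' Set.range bp := by
    rw [← Set.range_comp]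
    rfl
  rw [this, span_image, bp.span_eq, map_top, range_subtype]

namespace Matrix

theorem exists_eq_mul_of_col_mem_span {R m ι ι' : Type*} [CommSemiring R] [Fintype ι]
    (A : Matrix m ι R) (V : Matrix m ι' R)
    (h : ∀ c, V.col c ∈ Submodule.span R (Set.range A.col)) :
    ∃ G : Matrix ι ι' R, V = A * G := by
  choose g hg using fun c => (Submodule.mem_span_range_iff_exists_fun R).mp (h c)
  refine ⟨of fun l c => g c l, ?_⟩
  ext i c
  rw [mul_apply]
  simpa [mul_comm] using (congrFun (hg c) i).symm

theorem rank_add_le {K m ι : Type*} [Field K] [Fintype ι] (X Y : Matrix m ι K) :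
    (X + Y).rank ≤ X.rank + Y.rank := by
  rw [rank, rank, rank, mulVecLin_add]
  exact (Submodule.finrank_mono (LinearMap.range_add_le _ _)).trans
    (Submodule.finrank_add_le_finrank_add_finrank _ _)

theorem det_submatrix_equiv_sq {R α β : Type*} [CommRing R] [Fintype β] [DecidableEq β]
    (M : Matrix α β R) (e f : β ≃ α) :
    det (M.submatrix e id) ^ 2 = det (M.submatrix f id) ^ 2 := by
  have : M.submatrix e id = (M.submatrix f id).submatrix (e.trans f.symm) id := by
    ext i j
    simp
  rw [this, det_permute, mul_pow, ← Int.cast_pow, ← Units.val_pow_eq_pow_val, Int.units_sq]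
  simp

section PiecewiseRows

variable {ι ι' R : Type*} [DecidableEq ι] [CommRing R]

def piecewiseRows (s : Finset ι) (X Y : Matrix ι ι' R) : Matrix ι ι' R :=
  of fun i j => if i ∈ s then X i j else Y i j

theorem piecewiseRows_mul_eq_fromCols_mul_fromRows [Fintype ι] {κ ν : Type*} [Fintype κ]
    [Fintype ν] (s : Finset ι) (B : Matrix ι κ R) (C : Matrix ι ν R) (G : Matrix κ ι' R)
    (H : Matrix ν ι' R) :
    piecewiseRows s (B * G) (C * H)
      = fromCols (piecewiseRows s B 0) (piecewiseRows s 0 C) * fromRows G H := by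
  rw [fromCols_mul_fromRows]
  ext i j
  by_cases hi : i ∈ s <;> simp [piecewiseRows, mul_apply, hi]

variable [Fintype ι]

theorem det_add_eq_sum_det_piecewiseRows (X Y : Matrix ι ι R) :
    det (X + Y) = ∑ s : Finset ι, det (piecewiseRows s X Y) := by
  refine (detRowAlternating.toMultilinearMap.map_add_univ X Y).trans
    (sum_congr rfl fun s _ => congrArg det ?_)
  ext i j
  by_cases hi : i ∈ s <;> simp [piecewiseRows, Finset.piecewise, hi]

theorem det_diagonal_mul_add_diagonal_mul (α β : ι → R) (X Y : Matrix ι ι R) :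
    det (diagonal α * X + diagonal β * Y)
      = ∑ s : Finset ι, (∏ i, s.piecewise α β i) * det (piecewiseRows s X Y) := by
  rw [det_add_eq_sum_det_piecewiseRows]
  refine sum_congr rfl fun s _ => ?_
  have hdiag : piecewiseRows s (diagonal α * X) (diagonal β * Y)
      = diagonal (s.piecewise α β) * piecewiseRows s X Y := by
    ext i j
    by_cases hi : i ∈ s <;> simp [piecewiseRows, Finset.piecewise, hi]
  rw [hdiag, det_mul, det_diagonal]

theorem det_piecewiseRows_add_diagonal_mul {I : Finset ι} {X Y : Matrix ι ι R} (β : ι → R)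
    (h : ∀ s ⊂ I, det (piecewiseRows s X Y) = 0) :
    det (piecewiseRows I (X + diagonal β * Y) Y) = det (piecewiseRows I X Y) := by
  have hsplit : piecewiseRows I (X + diagonal β * Y) Y
      = diagonal (I.piecewise 1 0) * X + diagonal (I.piecewise β 1) * Y := by
    ext i j
    by_cases hi : i ∈ I <;> simp [piecewiseRows, hi]
  rw [hsplit, det_diagonal_mul_add_diagonal_mul, Fintype.sum_eq_single I]
  · rw [prod_eq_one fun i _ => by by_cases hi : i ∈ I <;> simp [hi], one_mul]
  · intro s hs
    by_cases hsI : s ⊆ I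
    · rw [h s (ssubset_of_subset_of_ne hsI hs), mul_zero]
    · obtain ⟨i, his, hiI⟩ := not_subset.mp hsI
      rw [prod_eq_zero (mem_univ i) (by simp [his, hiI]), zero_mul]

variable {K : Type*} [Field K]

theorem rank_piecewiseRows_zero_le [Fintype ι'] (s : Finset ι) (X : Matrix ι ι' K) :
    (piecewiseRows s X 0).rank ≤ min s.card X.rank := by
  refine le_min (rank_le_card_of_support_subset _ s fun i hi => ?_) ?_
  · by_contra h
    exact hi (by ext j; simp [piecewiseRows, Finset.mem_coe.not.mp h])
  · have hmask : piecewiseRows s X 0 = diagonal (fun i => if i ∈ s then (1 : K) else 0) * X := by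
      ext i j
      by_cases hi : i ∈ s <;> simp [piecewiseRows, hi]
    rw [hmask]
    exact rank_mul_le_right _ _

theorem det_piecewiseRows_eq_zero {X Y : Matrix ι ι K} {r : ℕ} (hX : X.rank ≤ r)
    (hY : r + Y.rank ≤ Fintype.card ι) {s : Finset ι} (hs : s.card ≠ r) :
    det (piecewiseRows s X Y) = 0 := by
  by_contra h
  have hsplit : piecewiseRows s X Y = piecewiseRows s X 0 + piecewiseRows sᶜ Y 0 := by
    ext i j
    by_cases hi : i ∈ s <;> simp [piecewiseRows, hi]
  have hrank := rank_of_det_ne_zero h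
  have hadd := rank_add_le (piecewiseRows s X 0) (piecewiseRows sᶜ Y 0)
  have hXs := rank_piecewiseRows_zero_le s X
  have hYs := rank_piecewiseRows_zero_le sᶜ Y
  have hcard := card_compl_add_card s
  rw [← hsplit] at hadd
  omega

end PiecewiseRows

section RowMinor

variable {R : Type*} [CommRing R] {n k m : ℕ}

/-- The maximal minor `d_S` of `B` on the rows in `S`, with the junk value `0` when `|S| ≠ k`. -/
noncomputable def rowMinor (B : Matrix (Fin n) (Fin k) R) (S : Finset (Fin n)) : R :=
  if h : S.card = k then (B.submatrix (S.orderEmbOfFin h) id).det else 0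

theorem rowMinor_of_card_eq (B : Matrix (Fin n) (Fin k) R) {S : Finset (Fin n)}
    (h : S.card = k) : rowMinor B S = (B.submatrix (S.orderEmbOfFin h) id).det :=
  dif_pos h

theorem rowMinor_of_card_ne (B : Matrix (Fin n) (Fin k) R) {S : Finset (Fin n)}
    (h : S.card ≠ k) : rowMinor B S = 0 :=
  dif_neg h

theorem sum_prod_piecewise_mul_rowMinor_sq (B : Matrix (Fin n) (Fin k) R) (d : Fin n → R)
    (hkm : k + m = n) :
    ∑ s, (∏ i, s.piecewise 1 (-d) i) * rowMinor B s ^ 2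
      = (-1) ^ m * ∑ M ∈ powersetCard m univ, rowMinor B Mᶜ ^ 2 * ∏ j ∈ M, d j := by
  rw [← compl_involutive.bijective.sum_comp, mul_sum,
    ← sum_subset (subset_univ (powersetCard m univ))]
  · refine sum_congr rfl fun M hM => ?_
    rw [mem_powersetCard_univ] at hM
    have hsign : ∏ i, Mᶜ.piecewise 1 (-d) i = ∏ i ∈ M, -d i := by simp [prod_piecewise]
    rw [hsign, prod_neg, hM]
    ring
  · intro M _ hM
    have hMn : M.card ≤ n := by simpa using M.card_le_univ
    rw [mem_powersetCard_univ] at hM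
    rw [rowMinor_of_card_ne B (by rw [card_compl, Fintype.card_fin]; omega)]
    ring

/-- `E_S`: the columns of the identity matrix indexed by `S`, in increasing order. -/
noncomputable def unitCols (S : Finset (Fin n)) (h : S.card = m) : Matrix (Fin n) (Fin m) R :=
  (1 : Matrix (Fin n) (Fin n) R).submatrix id (S.orderEmbOfFin h)

theorem unitCols_mul_submatrix_orderEmbOfFin {ι : Type*} (S : Finset (Fin n))
    (h : S.card = m) (N : Matrix (Fin n) ι R) :
    (unitCols S h : Matrix (Fin n) (Fin m) R) * N.submatrix (S.orderEmbOfFin h) id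
      = piecewiseRows S N 0 := by
  ext i j
  have := sum_map univ (S.orderEmbOfFin h).toEmbedding fun x => if i = x then N x j else 0
  rw [map_orderEmbOfFin_univ, sum_ite_eq] at this
  simpa [unitCols, mul_apply, one_apply, piecewiseRows, ite_mul] using this.symm

variable (B : Matrix (Fin n) (Fin k) R) (C : Matrix (Fin n) (Fin m) R)

theorem fromCols_piecewiseRows_eq_mul (S : Finset (Fin n)) (hS : Sᶜ.card = m) :
    fromCols (piecewiseRows S B 0) (piecewiseRows S 0 C)
      = fromCols B (unitCols Sᶜ hS)
        * (fromBlocks 1 0 (-B.submatrix (Sᶜ.orderEmbOfFin hS) id)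
            (C.submatrix (Sᶜ.orderEmbOfFin hS) id) :
              Matrix (Fin k ⊕ Fin m) (Fin k ⊕ Fin m) R) := by
  rw [fromCols_mul_fromBlocks, Matrix.mul_neg, unitCols_mul_submatrix_orderEmbOfFin,
    unitCols_mul_submatrix_orderEmbOfFin]
  ext i (l | l) <;> by_cases hi : i ∈ S <;> simp [piecewiseRows, hi]

theorem transpose_fromCols_mul_fromCols (hBC : Bᵀ * C = 0) (S T : Finset (Fin n))
    (hS : Sᶜ.card = m) (hT : T.card = k) :
    (fromCols B (unitCols Sᶜ hS))ᵀ * fromCols (unitCols T hT) C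
      = fromBlocks (B.submatrix (T.orderEmbOfFin hT) id)ᵀ 0
          ((unitCols Sᶜ hS)ᵀ * unitCols T hT) (C.submatrix (Sᶜ.orderEmbOfFin hS) id) := by
  rw [transpose_fromCols, fromRows_mul_fromCols, hBC]
  congr 1 <;> ext i j <;> simp [unitCols, mul_apply, one_apply]

theorem det_fromCols_unitCols_submatrix_sq (S : Finset (Fin n)) (hS : S.card = k)
    (hSc : Sᶜ.card = m) (e : Fin k ⊕ Fin m ≃ Fin n) :
    det ((fromCols B (unitCols Sᶜ hSc)).submatrix e id) ^ 2 = rowMinor B S ^ 2 := by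
  have hne : ∀ l j, S.orderEmbOfFin hS l ≠ Sᶜ.orderEmbOfFin hSc j := fun l j h =>
    mem_compl.mp (h ▸ Sᶜ.orderEmbOfFin_mem hSc j) (S.orderEmbOfFin_mem hS l)
  have hblocks : (fromCols B (unitCols Sᶜ hSc)).submatrix (finSumEquivOfFinset hS hSc) id
      = fromBlocks (B.submatrix (S.orderEmbOfFin hS) id) 0
          (B.submatrix (Sᶜ.orderEmbOfFin hSc) id) 1 := by
    ext (l | l) (j | j) <;> simp [unitCols, one_apply, hne]
  rw [det_submatrix_equiv_sq _ e (finSumEquivOfFinset hS hSc), hblocks, det_fromBlocks_zero₁₂,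
    det_one, mul_one, rowMinor_of_card_eq B hS]

theorem rowMinor_mul_det_fromCols_piecewiseRows (hBC : Bᵀ * C = 0) (e : Fin k ⊕ Fin m ≃ Fin n)
    {S T : Finset (Fin n)} (hS : S.card = k) (hT : T.card = k) :
    rowMinor B T * det ((fromCols (piecewiseRows S B 0) (piecewiseRows S 0 C)).submatrix e id)
      = rowMinor B S ^ 2 * det ((fromCols (unitCols T hT) C).submatrix e id) := by
  have hSc : Sᶜ.card = m := by
    have := Fintype.card_congr e
    simp only [Fintype.card_sum, Fintype.card_fin] at this
    rw [card_compl, Fintype.card_fin, hS]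
    omega
  set P := (fromCols B (unitCols Sᶜ hSc)).submatrix e id with hP
  set Q := (fromCols (unitCols T hT) C).submatrix e id with hQ
  have hfactor : det ((fromCols (piecewiseRows S B 0) (piecewiseRows S 0 C)).submatrix e id)
      = det P * det (C.submatrix (Sᶜ.orderEmbOfFin hSc) id) := by
    rw [fromCols_piecewiseRows_eq_mul B C S hSc, submatrix_mul _ _ _ _ _ Function.bijective_id,
      submatrix_id_id, det_mul, det_fromBlocks_zero₁₂, det_one, one_mul]
  have hPQ : det P * det Q = rowMinor B T * det (C.submatrix (Sᶜ.orderEmbOfFin hSc) id) := by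
    rw [← det_transpose P, ← det_mul, hP, hQ, transpose_submatrix, submatrix_mul_equiv,
      submatrix_id_id, transpose_fromCols_mul_fromCols B C hBC S T hSc hT,
      det_fromBlocks_zero₁₂, det_transpose, rowMinor_of_card_eq B hT]
  calc rowMinor B T * det ((fromCols (piecewiseRows S B 0) (piecewiseRows S 0 C)).submatrix e id)
      = det P * (rowMinor B T * det (C.submatrix (Sᶜ.orderEmbOfFin hSc) id)) := by
        rw [hfactor]; ring
    _ = det P ^ 2 * det Q := by rw [← hPQ]; ring
    _ = rowMinor B S ^ 2 * det Q := by rw [det_fromCols_unitCols_submatrix_sq B S hS hSc e]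

end RowMinor

section Field

variable {K : Type*} [Field K] {n k m : ℕ}

theorem rank_eq_of_rowMinor_ne_zero (B : Matrix (Fin n) (Fin k) K) {S : Finset (Fin n)}
    (hS : rowMinor B S ≠ 0) : B.rank = k := by
  by_cases h : S.card = k
  · rw [rowMinor_of_card_eq B h] at hS
    refine le_antisymm (rank_le_width B) ?_
    calc k = (B.submatrix (S.orderEmbOfFin h) id).rank := by
          rw [rank_of_det_ne_zero hS, Fintype.card_fin]
      _ ≤ B.rank := rank_submatrix_le _ _ _
  · exact absurd (rowMinor_of_card_ne B h) hS

theorem exists_forall_rowMinor_mul_det_piecewiseRows (B : Matrix (Fin n) (Fin k) K)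
    (C : Matrix (Fin n) (Fin m) K) (hBC : Bᵀ * C = 0) (hkm : k + m = n)
    (G : Matrix (Fin k) (Fin n) K) (H : Matrix (Fin m) (Fin n) K) {T : Finset (Fin n)}
    (hT : T.card = k) :
    ∃ κ, ∀ S,
      rowMinor B T * det (piecewiseRows S (B * G) (C * H)) = rowMinor B S ^ 2 * κ := by
  let e : Fin k ⊕ Fin m ≃ Fin n := finSumFinEquiv.trans (finCongr hkm)
  refine ⟨det ((fromCols (unitCols T hT) C).submatrix e id) * det ((fromRows G H).submatrix id e),
    fun S => ?_⟩
  by_cases hS : S.card = k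
  · rw [piecewiseRows_mul_eq_fromCols_mul_fromRows, ← det_submatrix_equiv_self e,
      submatrix_mul _ _ _ _ _ Function.bijective_id, det_mul, ← mul_assoc,
      rowMinor_mul_det_fromCols_piecewiseRows B C hBC e hS hT, mul_assoc]
  · have hX : (B * G).rank ≤ k := (rank_mul_le_left B G).trans (rank_le_width B)
    have hY : k + (C * H).rank ≤ Fintype.card (Fin n) := by
      have := (rank_mul_le_left C H).trans (rank_le_width C)
      rw [Fintype.card_fin]
      omega
    rw [det_piecewiseRows_eq_zero hX hY hS, rowMinor_of_card_ne B hS]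
    ring

theorem rowMinor_sq_mul_det_sub_diagonal_mul (B : Matrix (Fin n) (Fin k) K)
    (C : Matrix (Fin n) (Fin m) K) (hBC : Bᵀ * C = 0) (hkm : k + m = n)
    (G : Matrix (Fin k) (Fin n) K) (H : Matrix (Fin m) (Fin n) K) (d : Fin n → K)
    {I : Finset (Fin n)} (hI : I.card = k) (hdI : rowMinor B I ≠ 0) :
    rowMinor B I ^ 2 * det (B * G - diagonal d * (C * H))
      = ((-1) ^ m * ∑ M ∈ powersetCard m univ, rowMinor B Mᶜ ^ 2 * ∏ j ∈ M, d j)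
        * det (piecewiseRows I (B * G - diagonal d * (C * H)) (C * H)) := by
  obtain ⟨κ, hκ⟩ := exists_forall_rowMinor_mul_det_piecewiseRows B C hBC hkm G H hI
  have hvanish : ∀ s ⊂ I, det (piecewiseRows s (B * G) (C * H)) = 0 := fun s hs => by
    have hκs := hκ s
    rw [rowMinor_of_card_ne B (S := s) (by have := card_lt_card hs; omega), zero_pow two_ne_zero,
      zero_mul] at hκs
    exact (mul_eq_zero.mp hκs).resolve_left hdI
  have hκI : det (piecewiseRows I (B * G) (C * H)) = rowMinor B I * κ :=
    mul_left_cancel₀ hdI ((hκ I).trans (by ring))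
  have hexpand := det_diagonal_mul_add_diagonal_mul 1 (-d) (B * G) (C * H)
  rw [show (diagonal 1 : Matrix (Fin n) (Fin n) K) = 1 from diagonal_one, Matrix.one_mul] at hexpand
  rw [sub_eq_add_neg, ← Matrix.neg_mul, diagonal_neg, ← Pi.neg_def, hexpand,
    det_piecewiseRows_add_diagonal_mul _ hvanish, hκI,
    ← sum_prod_piecewise_mul_rowMinor_sq B d hkm, mul_sum, sum_mul]
  refine sum_congr rfl fun s _ => ?_
  linear_combination (rowMinor B I * ∏ i, s.piecewise 1 (-d) i) * hκ s

end Field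

end Matrix

theorem finrank_rowSpan {n k : ℕ} (b : Matrix (Fin n) (Fin k) ℂ) :
    Module.finrank ℂ (rowSpan n k b) = b.rank :=
  (rank_eq_finrank_span_cols b).symm

theorem transpose_mul_eq_zero_of_col_mem_annSub {n k m : ℕ} (b : Matrix (Fin n) (Fin k) ℂ)
    (C : Matrix (Fin n) (Fin m) ℂ) (hC : ∀ l, C.col l ∈ annSub n (rowSpan n k b)) :
    bᵀ * C = 0 := by
  ext l j
  simpa [mul_apply, mul_comm] using hC j (b.col l) (Submodule.subset_span ⟨l, rfl⟩)

theorem exists_mul_eq_of_range_eq_prod {n k : ℕ} (b : Matrix (Fin n) (Fin k) ℂ)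
    (hb : b.rank = k) (u : (Fin n → ℂ) →ₗ[ℂ] ((Fin n → ℂ) × (Fin n → ℂ)))
    (hui : Function.Injective u)
    (hur : LinearMap.range u = (rowSpan n k b).prod (annSub n (rowSpan n k b))) :
    ∃ (C : Matrix (Fin n) (Fin (n - k)) ℂ) (G : Matrix (Fin k) (Fin n) ℂ)
      (H : Matrix (Fin (n - k)) (Fin n) ℂ), bᵀ * C = 0
        ∧ of (fun i c => (u (Pi.single c 1)).1 i) = b * G
        ∧ of (fun i c => (u (Pi.single c 1)).2 i) = C * H := by
  have hdim := Submodule.finrank_prod (rowSpan n k b) (annSub n (rowSpan n k b))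
  rw [← hur, LinearMap.finrank_range_of_inj hui, Module.finrank_fin_fun, finrank_rowSpan, hb]
    at hdim
  obtain ⟨C, hC⟩ := Submodule.exists_matrix_span_col_eq (annSub n (rowSpan n k b))
    (m := n - k) (by omega)
  have hmem c : u (Pi.single c 1) ∈ (rowSpan n k b).prod (annSub n (rowSpan n k b)) :=
    hur ▸ LinearMap.mem_range_self u _
  obtain ⟨G, hG⟩ := exists_eq_mul_of_col_mem_span b _ fun c => (hmem c).1
  obtain ⟨H, hH⟩ := exists_eq_mul_of_col_mem_span C _ fun c => hC ▸ (hmem c).2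
  exact ⟨C, G, H, transpose_mul_eq_zero_of_col_mem_annSub b C fun l =>
    hC ▸ Submodule.subset_span ⟨l, rfl⟩, hG, hH⟩

theorem rowMinor_eq_det_orderIsoOfFin {n k : ℕ} (b : Fin n → Fin k → ℂ) {S : Finset (Fin n)}
    (h : S.card = k) :
    rowMinor (of b) S = det (of fun i l : Fin k => b ((S.orderIsoOfFin h) l).1 i) := by
  rw [rowMinor_of_card_eq _ h, ← det_transpose]
  rfl

/-- Here the tangent space to `L_{Y,a}` at the point with `p`-coordinates `p` is
parametrized by a linear isomorphism `u` of `ℂⁿ` onto `Y × Y^⊥` (the tangent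
space of the parametrizing space of `r_a`), `MA` is the derivative matrix of the
projection `π ∘ r_a` (target coordinates `q₁,…,qₙ`), `MB` is the derivative
matrix of the chart `(q_I, p_{Ī})` (coordinates listed in the order of the
indices), and `Jac_I = det MA / det MB`; the statement is written as
`d_I² · det MA = RHS · det MB`. -/
theorem stmt_12 (n k : ℕ) (hkn : k ≤ n) (b : Fin n → Fin k → ℂ)
    (a p : Fin n → ℂ)
    (I : Finset (Fin n)) (hI : I.card = k)
    (hdI : Matrix.det (Matrix.of fun i l : Fin k => b ((I.orderIsoOfFin hI) l).1 i) ≠ 0)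
    (u : (Fin n → ℂ) →ₗ[ℂ] ((Fin n → ℂ) × (Fin n → ℂ)))
    (hui : Function.Injective u)
    (hur : LinearMap.range u = (rowSpan n k b).prod (annSub n (rowSpan n k b)))
    (MA MB : Matrix (Fin n) (Fin n) ℂ)
    (hMA : ∀ i c, MA i c
      = (u (Pi.single c 1)).1 i - a i / (p i) ^ 2 * (u (Pi.single c 1)).2 i)
    (hMB : ∀ i c, MB i c = if i ∈ I then MA i c else (u (Pi.single c 1)).2 i) :
    (Matrix.det (Matrix.of fun i l : Fin k => b ((I.orderIsoOfFin hI) l).1 i)) ^ 2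
        * MA.det
      = ((-1) ^ (n - k) *
          ∑ M ∈ (Finset.powersetCard (n - k) (Finset.univ : Finset (Fin n))).attach,
            (Matrix.det (Matrix.of fun i l : Fin k =>
                b (((M.1ᶜ).orderIsoOfFin (show (M.1)ᶜ.card = k by
                  rw [Finset.card_compl, (Finset.mem_powersetCard.mp M.2).2,
                    Fintype.card_fin]
                  omega) l).1) i)) ^ 2
              * ∏ j ∈ M.1, a j / (p j) ^ 2) * MB.det := by
  rw [← rowMinor_eq_det_orderIsoOfFin b hI] at hdI ⊢
  obtain ⟨C, G, H, hBC, hV, hW⟩ :=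
    exists_mul_eq_of_range_eq_prod (of b) (rank_eq_of_rowMinor_ne_zero _ hdI) u hui hur
  have hMA' : MA = of b * G - diagonal (fun j => a j / p j ^ 2) * (C * H) := by
    rw [← hV, ← hW]
    ext i c
    simp [hMA]
  have hMB' : MB = piecewiseRows I MA (C * H) := by
    rw [← hW]
    ext i c
    simp [hMB, piecewiseRows]
  rw [hMB', hMA', rowMinor_sq_mul_det_sub_diagonal_mul _ C hBC (by omega) G H _ hI hdI,
    ← sum_attach]
  congr 3 with M
  rw [rowMinor_eq_det_orderIsoOfFin b]
end

section
/- Under the diffeomorphism of the critical set onto L_{Y,a} given by pⱼ = aⱼ/fⱼ, the Hessian of the master function equals Hess = (−1)^k Σ_{I, |I|=k} d_I² ∏_{i∈I} pᵢ²/aᵢ, and consequently for any k-subset I with d_I ≠ 0, Hess = (−1)^n d_I² Jac_I ∏_{j=1}^n pⱼ²/aⱼ. In particular the ratio of Hess and d_I² Jac_I never vanishes on L_{Y,a}. -/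
/-! With `B = (bⱼⁱ)` and `G = diag(pⱼ²/aⱼ)` the Hessian matrix is `-(Bᵀ G B)`, so the first
formula is the Cauchy–Binet formula.

For the second, write the columns of `u` as `(B C, W)` with `Bᵀ W = 0`, so that
`MA = B C - G⁻¹ W`, and split the rows into `I` and its complement `J`. Multiplying `MA` on the
left by `[[B_Iᵀ G_I, B_Jᵀ G_J], [0, -G_J]]` and `MB` by `[[B_Iᵀ G_I, -B_Jᵀ], [0, 1]]`, the
relation `Bᵀ W = 0` turns both products into block-triangular matrices, with diagonal blocks
`(Bᵀ G B, 1)` and `(B_Iᵀ G_I B_I, 1)`, times the same matrix `[C; W_J]`. Comparing determinants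
gives the identity. -/

open Finset Matrix

namespace Finset

theorem sum_injective_eq_sum_powersetCard_sum_perm {α β : Type*} [Fintype α] [LinearOrder α]
    [AddCommMonoid β] {k : ℕ} (F : (Fin k → α) → β) :
    ∑ r : Fin k → α with Function.Injective r, F r
      = ∑ T ∈ (powersetCard k (univ : Finset α)).attach, ∑ σ : Equiv.Perm (Fin k),
          F (T.1.orderEmbOfFin (mem_powersetCard.mp T.2).2 ∘ σ) := by
  rw [← sum_product']
  symm
  refine sum_bij (fun Tσ _ => Tσ.1.1.orderEmbOfFin (mem_powersetCard.mp Tσ.1.2).2 ∘ Tσ.2)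
    (fun Tσ _ => mem_filter.mpr
      ⟨mem_univ _, (orderEmbOfFin _ _).injective.comp Tσ.2.injective⟩)
    ?_ ?_ (fun _ _ => rfl)
  · rintro ⟨⟨T, hT⟩, σ⟩ - ⟨⟨T', hT'⟩, σ'⟩ - h
    have himage : ∀ (S : Finset α) (hS : S.card = k) (τ : Equiv.Perm (Fin k)),
        image (S.orderEmbOfFin hS ∘ τ) univ = S := fun S hS τ => by
      rw [← image_image, image_univ_equiv, image_orderEmbOfFin_univ]
    obtain rfl : T = T' := by
      simpa only [himage] using congrArg (fun r => image r univ) h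
    obtain rfl : σ = σ' := Equiv.ext fun i => (orderEmbOfFin _ _).injective (congrFun h i)
    rfl
  · intro r hr
    have hinj : Function.Injective r := (mem_filter.mp hr).2
    have hcard : (image r univ).card = k := by
      rw [card_image_of_injective _ hinj, card_univ, Fintype.card_fin]
    have hrange : ∀ i, r i ∈ Set.range ((image r univ).orderEmbOfFin hcard) := fun i => by
      rw [range_orderEmbOfFin]; exact mem_image_of_mem r (mem_univ i)
    choose σ hσ using hrange
    have hσinj : Function.Injective σ := fun i j hij => hinj (by rw [← hσ i, ← hσ j, hij])
    exact ⟨(⟨image r univ, mem_powersetCard.mpr ⟨subset_univ _, hcard⟩⟩,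
      Equiv.ofBijective σ (Finite.injective_iff_bijective.mp hσinj)), by simp, funext hσ⟩

end Finset

namespace Matrix

section CauchyBinet

variable {R α : Type*} [CommRing R] [Fintype α] {k : ℕ}

theorem det_mul_eq_sum_prod_mul_det_submatrix (M : Matrix (Fin k) α R)
    (N : Matrix α (Fin k) R) :
    det (M * N) = ∑ r : Fin k → α, (∏ i, M i (r i)) * det (N.submatrix r id) := by
  have hrows : M * N = of fun i => ∑ x, M i x • N x := by
    ext i j; simp [mul_apply]
  rw [hrows]
  exact (detRowAlternating.toMultilinearMap.map_sum (fun i x => M i x • N x)).trans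
    (sum_congr rfl fun r _ => detRowAlternating.toMultilinearMap.map_smul_univ _ _)

variable [LinearOrder α]

/-- The Cauchy–Binet formula. -/
theorem det_mul_eq_sum_powersetCard (M : Matrix (Fin k) α R) (N : Matrix α (Fin k) R) :
    det (M * N) = ∑ T ∈ (powersetCard k (univ : Finset α)).attach,
      det (M.submatrix id (T.1.orderEmbOfFin (mem_powersetCard.mp T.2).2))
        * det (N.submatrix (T.1.orderEmbOfFin (mem_powersetCard.mp T.2).2) id) := by
  have hnoninj : ∀ r ∈ (univ : Finset (Fin k → α)),
      r ∉ ({r | Function.Injective r} : Finset (Fin k → α)) →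
      (∏ i, M i (r i)) * det (N.submatrix r id) = 0 := by
    intro r _ hr
    obtain ⟨i, j, hij, hne⟩ := Function.not_injective_iff.mp (by simpa using hr)
    rw [det_zero_of_row_eq hne (by ext; simp [hij]), mul_zero]
  rw [det_mul_eq_sum_prod_mul_det_submatrix, ← sum_subset (filter_subset _ _) hnoninj,
    sum_injective_eq_sum_powersetCard_sum_perm]
  refine sum_congr rfl fun T _ => ?_
  set o := T.1.orderEmbOfFin (mem_powersetCard.mp T.2).2
  have hperm : ∀ σ : Equiv.Perm (Fin k), (∏ i, M i (o (σ i))) * det (N.submatrix (o ∘ σ) id)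
      = (Equiv.Perm.sign σ * ∏ i, (M.submatrix id o)ᵀ (σ i) i) * det (N.submatrix o id) := by
    intro σ
    rw [show N.submatrix (o ∘ σ) id = (N.submatrix o id).submatrix σ id from rfl, det_permute]
    simp only [transpose_apply, submatrix_apply, id]
    ring
  simp only [Function.comp_apply, hperm, ← sum_mul, ← det_apply', det_transpose]

theorem det_transpose_mul_diagonal_mul_eq_sum_powersetCard [DecidableEq α]
    (B : Matrix α (Fin k) R) (g : α → R) :
    det (Bᵀ * diagonal g * B) = ∑ T ∈ (powersetCard k (univ : Finset α)).attach,
      det (B.submatrix (T.1.orderEmbOfFin (mem_powersetCard.mp T.2).2) id) ^ 2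
        * ∏ i ∈ T.1, g i := by
  rw [Matrix.mul_assoc, det_mul_eq_sum_powersetCard]
  refine sum_congr rfl fun T _ => ?_
  set o := T.1.orderEmbOfFin (mem_powersetCard.mp T.2).2
  have hrows : (diagonal g * B).submatrix o id = diagonal (g ∘ o) * B.submatrix o id := by
    ext; simp [diagonal_mul]
  have hprod : ∏ l, g (o l) = ∏ i ∈ T.1, g i :=
    ((T.1.orderIsoOfFin (mem_powersetCard.mp T.2).2).toEquiv.prod_comp fun i : T.1 => g i).trans
      (prod_coe_sort _ _)
  rw [hrows, det_mul, det_diagonal, show Bᵀ.submatrix id o = (B.submatrix o id)ᵀ from rfl,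
    det_transpose, Function.comp_def, hprod]
  ring

end CauchyBinet

theorem diagonal_mul_diagonal_inv_mul {K m n : Type*} [DivisionRing K] [Fintype m]
    [DecidableEq m]
    {g : m → K} (hg : ∀ i, g i ≠ 0) (X : Matrix m n K) :
    diagonal g * (diagonal g⁻¹ * X) = X := by
  rw [← Matrix.mul_assoc, diagonal_mul_diagonal]
  simp [hg]

theorem transpose_mul_diagonal_mul_apply {R α n : Type*} [CommSemiring R] [Fintype α]
    [DecidableEq α] (B : Matrix α n R) (g : α → R) (i l : n) :
    (Bᵀ * diagonal g * B) i l = ∑ j, B j i * B j l * g j := by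
  rw [Matrix.mul_assoc, mul_apply]
  exact sum_congr rfl fun j _ => by rw [diagonal_mul, transpose_apply]; ring

theorem transpose_mul_eq_add_of_equiv_sum {R ι m κ n p : Type*} [NonUnitalNonAssocSemiring R]
    [Fintype ι]
    [Fintype m] [Fintype κ] (f : m ⊕ κ ≃ ι) (X : Matrix ι n R) (Y : Matrix ι p R) :
    Xᵀ * Y = (X.submatrix (f ∘ .inl) id)ᵀ * Y.submatrix (f ∘ .inl) id
      + (X.submatrix (f ∘ .inr) id)ᵀ * Y.submatrix (f ∘ .inr) id := by
  ext i j
  simp only [mul_apply, add_apply, transpose_apply, submatrix_apply, Function.comp_apply, id]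
  rw [← f.sum_comp, Fintype.sum_sum_type]

section GramBlocks

variable {K m κ : Type*} [Field K] [Fintype m] [Fintype κ] [DecidableEq m] [DecidableEq κ]
  (B₁ : Matrix m m K) (B₂ : Matrix κ m K) {g₁ : m → K} {g₂ : κ → K}
theorem fromBlocks_mul_fromRows_eq_gram_mul {ν : Type*} (C : Matrix m ν K)
    {W₁ : Matrix m ν K} {W₂ : Matrix κ ν K} (hg₁ : ∀ i, g₁ i ≠ 0) (hg₂ : ∀ i, g₂ i ≠ 0)
    (hW : B₁ᵀ * W₁ + B₂ᵀ * W₂ = 0) :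
    fromBlocks (B₁ᵀ * diagonal g₁) (B₂ᵀ * diagonal g₂) 0 (-diagonal g₂)
        * fromRows (B₁ * C - diagonal g₁⁻¹ * W₁) (B₂ * C - diagonal g₂⁻¹ * W₂)
      = fromBlocks (B₁ᵀ * diagonal g₁ * B₁ + B₂ᵀ * diagonal g₂ * B₂) 0 (-(diagonal g₂ * B₂))
          (1 : Matrix κ κ K) * fromRows C W₂ := by
  rw [fromBlocks_mul_fromRows, fromBlocks_mul_fromRows]
  congr 1
  · simp only [Matrix.mul_sub, Matrix.mul_assoc, diagonal_mul_diagonal_inv_mul hg₁,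
      diagonal_mul_diagonal_inv_mul hg₂, Matrix.zero_mul, add_zero, Matrix.add_mul]
    rw [← sub_eq_zero, ← neg_eq_zero, ← hW]
    abel
  · simp only [Matrix.mul_sub, Matrix.neg_mul, diagonal_mul_diagonal_inv_mul hg₂,
      Matrix.zero_mul, Matrix.one_mul, Matrix.mul_assoc]
    abel

theorem fromBlocks_mul_fromRows_eq_partialGram_mul {ν : Type*} (C : Matrix m ν K)
    {W₁ : Matrix m ν K} {W₂ : Matrix κ ν K} (hg₁ : ∀ i, g₁ i ≠ 0)
    (hW : B₁ᵀ * W₁ + B₂ᵀ * W₂ = 0) :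
    fromBlocks (B₁ᵀ * diagonal g₁) (-B₂ᵀ) 0 (1 : Matrix κ κ K)
        * fromRows (B₁ * C - diagonal g₁⁻¹ * W₁) W₂
      = fromBlocks (B₁ᵀ * diagonal g₁ * B₁) (0 : Matrix m κ K) 0 1 * fromRows C W₂ := by
  rw [fromBlocks_mul_fromRows, fromBlocks_mul_fromRows]
  congr 1
  · simp only [Matrix.mul_sub, Matrix.mul_assoc, diagonal_mul_diagonal_inv_mul hg₁,
      Matrix.zero_mul, add_zero, Matrix.neg_mul]
    rw [← sub_eq_zero, ← neg_eq_zero, ← hW]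
    abel
  · simp only [Matrix.zero_mul, zero_add]

theorem det_neg_gram_mul_det_fromRows {C W₁ : Matrix m (m ⊕ κ) K} {W₂ : Matrix κ (m ⊕ κ) K}
    (hg₁ : ∀ i, g₁ i ≠ 0) (hg₂ : ∀ i, g₂ i ≠ 0) (hB₁ : det B₁ ≠ 0)
    (hW : B₁ᵀ * W₁ + B₂ᵀ * W₂ = 0) :
    det (-(B₁ᵀ * diagonal g₁ * B₁ + B₂ᵀ * diagonal g₂ * B₂))
        * det (fromRows (B₁ * C - diagonal g₁⁻¹ * W₁) W₂)
      = (-1) ^ (Fintype.card m + Fintype.card κ) * det B₁ ^ 2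
        * det (fromRows (B₁ * C - diagonal g₁⁻¹ * W₁) (B₂ * C - diagonal g₂⁻¹ * W₂))
        * ((∏ i, g₁ i) * ∏ i, g₂ i) := by
  have hA := congrArg det (fromBlocks_mul_fromRows_eq_gram_mul B₁ B₂ C hg₁ hg₂ hW)
  have hB := congrArg det (fromBlocks_mul_fromRows_eq_partialGram_mul B₁ B₂ C hg₁ hW)
  simp only [det_mul, det_fromBlocks_zero₂₁, det_fromBlocks_zero₁₂, det_transpose, det_neg,
    det_diagonal, det_one, mul_one] at hA hB
  have hd : det B₁ * ∏ i, g₁ i ≠ 0 := mul_ne_zero hB₁ (prod_ne_zero_iff.mpr fun i _ => hg₁ i)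
  have hMB : det (fromRows (B₁ * C - diagonal g₁⁻¹ * W₁) W₂) = det B₁ * det (fromRows C W₂) :=
    mul_left_cancel₀ hd (by rw [hB]; ring)
  rw [det_neg, hMB]
  linear_combination (-(-1) ^ Fintype.card m * det B₁) * hA

end GramBlocks

theorem det_neg_gram_mul_det_ite {K ι m : Type*} [Field K] [Fintype m] [DecidableEq m]
    [Fintype ι] [DecidableEq ι]
    {B : Matrix ι m K} {g : ι → K} (hg : ∀ i, g i ≠ 0) (C : Matrix m ι K) {W : Matrix ι ι K}
    (hW : Bᵀ * W = 0) (I : Finset ι) (e : m ≃ I)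
    (hB : det (B.submatrix (fun l => (e l : ι)) id) ≠ 0) :
    det (-(Bᵀ * diagonal g * B))
        * det (of fun i c => if i ∈ I then (B * C - diagonal g⁻¹ * W) i c else W i c)
      = (-1) ^ Fintype.card ι * det (B.submatrix (fun l => (e l : ι)) id) ^ 2
        * det (B * C - diagonal g⁻¹ * W) * ∏ i, g i := by
  let f : m ⊕ {i // i ∉ I} ≃ ι :=
    (Equiv.sumCongr e (Equiv.refl _)).trans (Equiv.sumCompl (· ∈ I))
  have hgram : Bᵀ * diagonal g * B
      = (B.submatrix (f ∘ .inl) id)ᵀ * diagonal (g ∘ f ∘ .inl) * B.submatrix (f ∘ .inl) id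
        + (B.submatrix (f ∘ .inr) id)ᵀ * diagonal (g ∘ f ∘ .inr) * B.submatrix (f ∘ .inr) id := by
    simp only [Matrix.mul_assoc]
    rw [transpose_mul_eq_add_of_equiv_sum f]
    congr 2 <;> ext <;> simp [diagonal_mul]
  have hW' : (B.submatrix (f ∘ .inl) id)ᵀ * W.submatrix (f ∘ .inl) f
      + (B.submatrix (f ∘ .inr) id)ᵀ * W.submatrix (f ∘ .inr) f = 0 :=
    (transpose_mul_eq_add_of_equiv_sum f B (W.submatrix id f)).symm.trans <| by
      ext i c; simpa [mul_apply] using congrFun (congrFun hW i) (f c)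
  have hMA : (B * C - diagonal g⁻¹ * W).submatrix f f
      = fromRows (B.submatrix (f ∘ .inl) id * C.submatrix id f
          - diagonal (g ∘ f ∘ .inl)⁻¹ * W.submatrix (f ∘ .inl) f)
        (B.submatrix (f ∘ .inr) id * C.submatrix id f
          - diagonal (g ∘ f ∘ .inr)⁻¹ * W.submatrix (f ∘ .inr) f) := by
    ext (l | x) c <;> simp [diagonal_mul] <;> simp [mul_apply]
  have hMB :
      (of fun i c => if i ∈ I then (B * C - diagonal g⁻¹ * W) i c else W i c).submatrix f f
      = fromRows (B.submatrix (f ∘ .inl) id * C.submatrix id f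
          - diagonal (g ∘ f ∘ .inl)⁻¹ * W.submatrix (f ∘ .inl) f) (W.submatrix (f ∘ .inr) f) := by
    ext (l | x) c
    · simp [f, diagonal_mul]; simp [mul_apply]
    · simp [f, x.2]
  rw [hgram, ← det_submatrix_equiv_self f (of _), ← det_submatrix_equiv_self f (B * C - _),
    hMA, hMB, Fintype.card_congr f.symm, Fintype.card_sum, ← f.prod_comp, Fintype.prod_sum_type]
  exact det_neg_gram_mul_det_fromRows _ _ (fun _ => hg _) (fun _ => hg _) hB hW'

end Matrix

theorem rowSpan_eq_range_mulVecLin (n k : ℕ) (b : Fin n → Fin k → ℂ) :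
    rowSpan n k b = LinearMap.range (of b).mulVecLin := by
  rw [range_mulVecLin]; rfl

theorem exists_eq_mul_of_col_mem_rowSpan {n k : ℕ} {b : Fin n → Fin k → ℂ} {ι : Type*}
    (V : Matrix (Fin n) ι ℂ) (hV : ∀ c, V.col c ∈ rowSpan n k b) :
    ∃ C : Matrix (Fin k) ι ℂ, V = of b * C := by
  simp only [rowSpan_eq_range_mulVecLin, LinearMap.mem_range] at hV
  choose w hw using hV
  refine ⟨(of w)ᵀ, ?_⟩
  ext i c
  rw [← col_apply V, ← hw c]
  simp [mulVec, dotProduct, mul_apply]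

theorem transpose_mul_eq_zero_of_col_mem_annSub_s13 {n k : ℕ} {b : Fin n → Fin k → ℂ} {ι : Type*}
    (W : Matrix (Fin n) ι ℂ) (hW : ∀ c, W.col c ∈ annSub n (rowSpan n k b)) :
    (of b)ᵀ * W = 0 := by
  ext i c
  simpa [mul_apply, mul_comm] using hW c _ (Submodule.subset_span ⟨i, rfl⟩)

theorem stmt_13_general (n k : ℕ) (b : Fin n → Fin k → ℂ)
    (a p : Fin n → ℂ) (ha : ∀ j, a j ≠ 0) (hp : ∀ j, p j ≠ 0)
    (I : Finset (Fin n)) (hI : I.card = k)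
    (hdI : Matrix.det (Matrix.of fun i l : Fin k => b ((I.orderIsoOfFin hI) l).1 i) ≠ 0)
    (u : (Fin n → ℂ) →ₗ[ℂ] ((Fin n → ℂ) × (Fin n → ℂ)))
    (hur : LinearMap.range u = (rowSpan n k b).prod (annSub n (rowSpan n k b)))
    (MA MB : Matrix (Fin n) (Fin n) ℂ)
    (hMA : ∀ i c, MA i c
      = (u (Pi.single c 1)).1 i - a i / (p i) ^ 2 * (u (Pi.single c 1)).2 i)
    (hMB : ∀ i c, MB i c = if i ∈ I then MA i c else (u (Pi.single c 1)).2 i) :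
    (Matrix.det (Matrix.of fun i l : Fin k => -(∑ j, b j i * b j l * (p j) ^ 2 / a j))
        = (-1) ^ k *
          ∑ T ∈ (Finset.powersetCard k (Finset.univ : Finset (Fin n))).attach,
            (Matrix.det (Matrix.of fun i l : Fin k =>
                b ((T.1.orderIsoOfFin (Finset.mem_powersetCard.mp T.2).2) l).1 i)) ^ 2
              * ∏ i ∈ T.1, (p i) ^ 2 / a i) ∧
    (Matrix.det (Matrix.of fun i l : Fin k => -(∑ j, b j i * b j l * (p j) ^ 2 / a j))
        * MB.det
      = (-1) ^ n *
          (Matrix.det (Matrix.of fun i l : Fin k => b ((I.orderIsoOfFin hI) l).1 i)) ^ 2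
          * MA.det * ∏ j, (p j) ^ 2 / a j) ∧
    (∏ j, (p j) ^ 2 / a j) ≠ 0 := by
  set B : Matrix (Fin n) (Fin k) ℂ := of b
  set g : Fin n → ℂ := fun j => p j ^ 2 / a j
  have hg : ∀ j, g j ≠ 0 := fun j => div_ne_zero (pow_ne_zero _ (hp j)) (ha j)
  have hmem : ∀ c, u (Pi.single c 1) ∈ (rowSpan n k b).prod (annSub n (rowSpan n k b)) :=
    fun c => hur ▸ LinearMap.mem_range_self u _
  obtain ⟨C, hC⟩ := exists_eq_mul_of_col_mem_rowSpan (of fun i c => (u (Pi.single c 1)).1 i)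
    fun c => (hmem c).1
  set W : Matrix (Fin n) (Fin n) ℂ := of fun i c => (u (Pi.single c 1)).2 i
  have hW : Bᵀ * W = 0 := transpose_mul_eq_zero_of_col_mem_annSub_s13 W fun c => (hmem c).2
  have hMA_eq : MA = B * C - diagonal g⁻¹ * W := by
    ext i c
    rw [hMA, ← hC]
    simp [g, diagonal_mul, W]
  have hMB_eq : MB = of fun i c => if i ∈ I then (B * C - diagonal g⁻¹ * W) i c else W i c := by
    ext i c; rw [hMB, hMA_eq]; rfl
  have hH : (of fun i l : Fin k => -(∑ j, b j i * b j l * (p j) ^ 2 / a j))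
      = -(Bᵀ * diagonal g * B) := by
    ext i l
    rw [neg_apply, transpose_mul_diagonal_mul_apply]
    simp only [B, g, of_apply, mul_div_assoc]
  refine ⟨?_, ?_, prod_ne_zero_iff.mpr fun j _ => hg j⟩
  · rw [hH, det_neg, Fintype.card_fin, det_transpose_mul_diagonal_mul_eq_sum_powersetCard]
    exact congrArg _ (sum_congr rfl fun T _ => by rw [← det_transpose]; rfl)
  · rw [hH, hMA_eq, hMB_eq, det_neg_gram_mul_det_ite hg C hW I (I.orderIsoOfFin hI).toEquiv,
      Fintype.card_fin, ← det_transpose]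
    · rfl
    · rwa [← det_transpose]

/-- Under the diffeomorphism `pⱼ = aⱼ/fⱼ` of the critical set onto `L_{Y,a}`
(so `aⱼ/fⱼ² = pⱼ²/aⱼ`), the Hessian of the master function equals
`Hess = (−1)^k ∑_{|I|=k} d_I² ∏_{i∈I} pᵢ²/aᵢ`, and consequently, for any
`k`-subset `I` with `d_I ≠ 0`, `Hess = (−1)^n d_I² Jac_I ∏ⱼ pⱼ²/aⱼ` (written as
`Hess · det MB = (−1)^n d_I² · det MA · ∏ⱼ pⱼ²/aⱼ`, where `Jac_I = det MA/det MB`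
as in Theorem 4.4); in particular the ratio `Hess/(d_I² Jac_I) = (−1)^n ∏ pⱼ²/aⱼ`
never vanishes on `L_{Y,a}`. -/
theorem stmt_13 (n k : ℕ) (hkn : k ≤ n) (b : Fin n → Fin k → ℂ)
    (a p : Fin n → ℂ) (ha : ∀ j, a j ≠ 0) (hp : ∀ j, p j ≠ 0)
    (hpY : ∀ i, ∑ j, b j i * p j = 0)
    (I : Finset (Fin n)) (hI : I.card = k)
    (hdI : Matrix.det (Matrix.of fun i l : Fin k => b ((I.orderIsoOfFin hI) l).1 i) ≠ 0)
    (u : (Fin n → ℂ) →ₗ[ℂ] ((Fin n → ℂ) × (Fin n → ℂ)))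
    (hui : Function.Injective u)
    (hur : LinearMap.range u = (rowSpan n k b).prod (annSub n (rowSpan n k b)))
    (MA MB : Matrix (Fin n) (Fin n) ℂ)
    (hMA : ∀ i c, MA i c
      = (u (Pi.single c 1)).1 i - a i / (p i) ^ 2 * (u (Pi.single c 1)).2 i)
    (hMB : ∀ i c, MB i c = if i ∈ I then MA i c else (u (Pi.single c 1)).2 i)
    (hcoord : MB.det ≠ 0) :
    (Matrix.det (Matrix.of fun i l : Fin k => -(∑ j, b j i * b j l * (p j) ^ 2 / a j))
        = (-1) ^ k *
          ∑ T ∈ (Finset.powersetCard k (Finset.univ : Finset (Fin n))).attach,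
            (Matrix.det (Matrix.of fun i l : Fin k =>
                b ((T.1.orderIsoOfFin (Finset.mem_powersetCard.mp T.2).2) l).1 i)) ^ 2
              * ∏ i ∈ T.1, (p i) ^ 2 / a i) ∧
    (Matrix.det (Matrix.of fun i l : Fin k => -(∑ j, b j i * b j l * (p j) ^ 2 / a j))
        * MB.det
      = (-1) ^ n *
          (Matrix.det (Matrix.of fun i l : Fin k => b ((I.orderIsoOfFin hI) l).1 i)) ^ 2
          * MA.det * ∏ j, (p j) ^ 2 / a j) ∧
    (∏ j, (p j) ^ 2 / a j) ≠ 0 :=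
  stmt_13_general n k b a p ha hp I hI hdI u hur MA MB hMA hMB
end

section
/- Let Y ⊂ ℝ^n be a k-dimensional real subspace with Y^⊥ ⊄ {pⱼ = 0} for all j, let a ∈ (ℝ_{>0})^n, and let x ∈ ℝ^n. Then every solution p ∈ (ℂ^×)^n of the system Σⱼ αⱼpⱼ = 0 (for all α ∈ Y) and Σⱼ βⱼ(xⱼ − aⱼ/pⱼ) = 0 (for all β ∈ Y^⊥) corresponds, via pⱼ = aⱼ/fⱼ(u), to a critical point u of the real master function Σⱼ aⱼ log|fⱼ| on the real complement; in particular, all such solutions p are real. -/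
/-! Put `c = x - a/p`. The second system says that `Re c` and `Im c` are orthogonal to `Y^⊥`,
hence lie in `Y`. Testing the first system with `α = Im (a/p) = -Im c ∈ Y` gives
`∑ Im (aⱼ/pⱼ) pⱼ = 0`, whose imaginary part is `-∑ aⱼ (Im pⱼ)² / |pⱼ|²`; since `aⱼ > 0`, every
`pⱼ` is real. Then `Re c = -∑ uᵢ bⁱ` for some real `u`, i.e. `fⱼ(u) = aⱼ/pⱼ`, and the first
system tested on the rows `bⁱ` is the critical point equation `∂Φ/∂uᵢ = 0`. -/

/-- The real span `Y ⊂ ℝⁿ` of the rows `bⁱ = (bⁱ₁, …, bⁱₙ)`. -/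
noncomputable def rowSpanR (n k : ℕ) (b : Fin n → Fin k → ℝ) :
    Submodule ℝ (Fin n → ℝ) :=
  Submodule.span ℝ (Set.range fun i : Fin k => fun j : Fin n => b j i)

open Matrix

theorem Submodule.mem_of_forall_dotProduct_eq_zero {K ι : Type*} [Field K] [Fintype ι]
    {Y : Submodule K (ι → K)} {w : ι → K}
    (h : ∀ β : ι → K, (∀ y ∈ Y, β ⬝ᵥ y = 0) → β ⬝ᵥ w = 0) : w ∈ Y := by
  classical
  rw [← Subspace.forall_mem_dualAnnihilator_apply_eq_zero_iff]
  intro φ hφ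
  have hdot : ∀ v, φ v = (fun j => φ (Pi.single j 1)) ⬝ᵥ v := fun v => by
    rw [φ.pi_apply_eq_sum_univ v, dotProduct]
    refine Finset.sum_congr rfl fun j _ => ?_
    rw [smul_eq_mul, mul_comm]
    congr 2
    ext i
    simp [Pi.single_apply, eq_comm]
  rw [hdot]
  exact h _ fun y hy => (hdot y).symm.trans ((Submodule.mem_dualAnnihilator φ).mp hφ y hy)

theorem Submodule.re_mem_and_im_mem_of_forall_dotProduct_eq_zero {ι : Type*} [Fintype ι]
    {Y : Submodule ℝ (ι → ℝ)} {c : ι → ℂ}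
    (h : ∀ β : ι → ℝ, (∀ y ∈ Y, β ⬝ᵥ y = 0) → ∑ j, (β j : ℂ) * c j = 0) :
    (fun j => (c j).re) ∈ Y ∧ (fun j => (c j).im) ∈ Y := by
  constructor <;> refine mem_of_forall_dotProduct_eq_zero fun β hβ => ?_
  · simpa [dotProduct, Complex.re_sum] using congrArg Complex.re (h β hβ)
  · simpa [dotProduct, Complex.im_sum] using congrArg Complex.im (h β hβ)

theorem Complex.im_eq_zero_of_sum_im_div_mul_eq_zero {ι : Type*} [Fintype ι] {a : ι → ℝ}
    (ha : ∀ j, 0 < a j) {p : ι → ℂ} (h : ∑ j, ((a j / p j).im : ℂ) * p j = 0) (j : ι) :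
    (p j).im = 0 := by
  have hterm : ∀ j, (((a j / p j).im : ℂ) * p j).im = -(a j * (p j).im ^ 2 / normSq (p j)) := by
    intro j
    rw [im_ofReal_mul, div_im]
    simp only [ofReal_re, ofReal_im, zero_mul, zero_div, zero_sub]
    ring
  have hsum : ∑ j, a j * (p j).im ^ 2 / normSq (p j) = 0 := by
    simpa [im_sum, hterm] using congrArg im h
  have hj := (Finset.sum_eq_zero_iff_of_nonneg fun j _ =>
    div_nonneg (mul_nonneg (ha j).le (sq_nonneg _)) (normSq_nonneg _)).mp hsum j (Finset.mem_univ j)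
  rcases div_eq_zero_iff.mp hj with hj | hj
  · simpa [(ha j).ne'] using hj
  · simp [normSq_eq_zero.mp hj]

theorem exists_critical_point_of_real_solution {n k : ℕ} {b : Fin n → Fin k → ℝ}
    {a x r : Fin n → ℝ} (ha : ∀ j, a j ≠ 0) (hr : ∀ j, r j ≠ 0)
    (hcrit : ∀ i, ∑ j, b j i * r j = 0)
    (hY : (fun j => x j - a j / r j) ∈ rowSpanR n k b) :
    ∃ u : Fin k → ℝ,
      (∀ j, (∑ i, b j i * u i) + x j ≠ 0) ∧
      (∀ i, ∑ j, b j i * (a j / ((∑ i', b j i' * u i') + x j)) = 0) ∧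
      (∀ j, a j / ((∑ i, b j i * u i) + x j) = r j) := by
  rw [rowSpanR, Submodule.mem_span_range_iff_exists_fun] at hY
  obtain ⟨s, hs⟩ := hY
  have hf : ∀ j, (∑ i, b j i * (-s) i) + x j = a j / r j := by
    intro j
    have hs_j : ∑ i, b j i * s i = x j - a j / r j := by simpa [mul_comm] using congrFun hs j
    simp only [Pi.neg_apply, mul_neg, Finset.sum_neg_distrib, hs_j]
    ring
  refine ⟨-s, fun j => ?_, fun i => ?_, fun j => ?_⟩
  · rw [hf]; exact div_ne_zero (ha j) (hr j)
  · simpa only [hf, div_div_cancel₀ (ha _)] using hcrit i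
  · rw [hf, div_div_cancel₀ (ha j)]

theorem stmt_15_general (n k : ℕ) (b : Fin n → Fin k → ℝ) (a : Fin n → ℝ)
    (ha : ∀ j, 0 < a j) (x : Fin n → ℝ)
    (p : Fin n → ℂ) (hp : ∀ j, p j ≠ 0)
    (h1 : ∀ α : Fin n → ℝ, (fun j => α j) ∈ rowSpanR n k b →
      ∑ j, (α j : ℂ) * p j = 0)
    (h2 : ∀ β : Fin n → ℝ, (∀ y ∈ rowSpanR n k b, ∑ j, β j * y j = 0) →
      ∑ j, (β j : ℂ) * ((x j : ℂ) - (a j : ℂ) / p j) = 0) :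
    ∃ u : Fin k → ℝ,
      (∀ j, (∑ i, b j i * u i) + x j ≠ 0) ∧
      (∀ i, ∑ j, b j i * (a j / ((∑ i', b j i' * u i') + x j)) = 0) ∧
      (∀ j, p j = ((a j / ((∑ i, b j i * u i) + x j) : ℝ) : ℂ)) := by
  obtain ⟨hre, him⟩ := Submodule.re_mem_and_im_mem_of_forall_dotProduct_eq_zero h2
  have him_ap : (fun j => ((a j : ℂ) / p j).im) ∈ rowSpanR n k b := by
    convert (rowSpanR n k b).neg_mem him using 1
    ext j
    simp
  have him_p : ∀ j, (p j).im = 0 :=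
    Complex.im_eq_zero_of_sum_im_div_mul_eq_zero ha (h1 _ him_ap)
  obtain ⟨r, rfl⟩ : ∃ r : Fin n → ℝ, p = fun j => (r j : ℂ) :=
    ⟨fun j => (p j).re, funext fun j => Complex.ext rfl (by simp [him_p])⟩
  have hcol : ∀ i, (fun j => b j i) ∈ rowSpanR n k b :=
    fun i => Submodule.subset_span (Set.mem_range_self i)
  have hcrit : ∀ i, ∑ j, b j i * r j = 0 := fun i => by
    have h := h1 _ (hcol i)
    beta_reduce at h
    exact_mod_cast h
  obtain ⟨u, hu_ne, hu_crit, hu_r⟩ := exists_critical_point_of_real_solution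
    (fun j => (ha j).ne') (fun j => Complex.ofReal_ne_zero.mp (hp j)) hcrit (by simpa using hre)
  exact ⟨u, hu_ne, hu_crit, fun j => by rw [hu_r]⟩

/-- Reality: for real data `b`, positive weights `a` and real `x`, every complex
solution `p ∈ (ℂ^×)ⁿ` of the system `∑ αⱼ pⱼ = 0` (α ∈ Y), `∑ βⱼ(xⱼ − aⱼ/pⱼ) = 0`
(β ∈ Y^⊥) corresponds, via `pⱼ = aⱼ/fⱼ(u)`, to a critical point `u` of the real
master function `∑ aⱼ log |fⱼ|` on the real complement; in particular all such
solutions `p` are real. -/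
theorem stmt_15 (n k : ℕ) (b : Fin n → Fin k → ℝ) (a : Fin n → ℝ)
    (ha : ∀ j, 0 < a j) (x : Fin n → ℝ)
    (hspan : ∀ t : Fin k → ℝ, (∀ j, ∑ i, b j i * t i = 0) → t = 0)
    (hperp : ∀ j, ∃ β : Fin n → ℝ,
      (∀ y ∈ rowSpanR n k b, ∑ j', β j' * y j' = 0) ∧ β j ≠ 0)
    (p : Fin n → ℂ) (hp : ∀ j, p j ≠ 0)
    (h1 : ∀ α : Fin n → ℝ, (fun j => α j) ∈ rowSpanR n k b →
      ∑ j, (α j : ℂ) * p j = 0)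
    (h2 : ∀ β : Fin n → ℝ, (∀ y ∈ rowSpanR n k b, ∑ j, β j * y j = 0) →
      ∑ j, (β j : ℂ) * ((x j : ℂ) - (a j : ℂ) / p j) = 0) :
    ∃ u : Fin k → ℝ,
      (∀ j, (∑ i, b j i * u i) + x j ≠ 0) ∧
      (∀ i, ∑ j, b j i * (a j / ((∑ i', b j i' * u i') + x j)) = 0) ∧
      (∀ j, p j = ((a j / ((∑ i, b j i * u i) + x j) : ℝ) : ℂ)) :=
  stmt_15_general n k b a ha x p hp h1 h2
end

section
/- For a weighted essential arrangement A with normal crossings and unbalanced weight a, the marked elements w_{i₁,…,i_k} = d_{i₁,…,i_k} · (a_{i₁}/[f_{i₁}]) ⋯ (a_{i_k}/[f_{i_k}]) in the algebra O(C_{A,a}) of functions on the critical set satisfy: (i) the skew-symmetry w_{i_{σ(1)},…,i_{σ(k)}} = (−1)^σ w_{i₁,…,i_k} for σ ∈ S_k, and (ii) for every independent (k−1)-subset {i₂,…,i_k}, the relation Σ_{j=1}^n w_{j,i₂,…,i_k} = 0 holds in O(C_{A,a}) (with w = 0 for dependent index subsets). -/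
/-- For an arrangement `{fⱼ = 0}` in `ℂᵏ` with weight `a`, the marked elements
`w_{i₁,…,i_k} = d_{i₁,…,i_k} (a_{i₁}/f_{i₁}) ⋯ (a_{i_k}/f_{i_k})` of the algebra
`O(C_{A,a})` of functions on the critical set satisfy (i) skew-symmetry
`w_{i_{σ(1)},…,i_{σ(k)}} = (−1)^σ w_{i₁,…,i_k}`, and (ii) for every independent
`(k−1)`-subset `{i₂,…,i_k}` the relation `∑ⱼ w_{j,i₂,…,i_k} = 0` on `C_{A,a}`
(with `w = 0` for dependent index subsets, which is automatic here since then
the determinant `d` vanishes). -/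
theorem stmt_17 (n k : ℕ) [NeZero k] (b : Fin n → Fin k → ℂ)
    (a z : Fin n → ℂ) (ha : ∀ j, a j ≠ 0)
    (f : (Fin k → ℂ) → Fin n → ℂ)
    (hf : ∀ u j, f u j = (∑ i, b j i * u i) + z j)
    (C : Set (Fin k → ℂ))
    (hC : C = {u | (∀ j, f u j ≠ 0) ∧ ∀ i, ∑ j, b j i * (a j / f u j) = 0})
    (w : (Fin k → Fin n) → (Fin k → ℂ) → ℂ)
    (hw : ∀ τ u, w τ u = Matrix.det (Matrix.of fun i l : Fin k => b (τ l) i)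
      * ∏ l, a (τ l) / f u (τ l)) :
    (∀ (σ : Equiv.Perm (Fin k)) (τ : Fin k → Fin n), ∀ u ∈ C,
      w (τ ∘ σ) u = ((Equiv.Perm.sign σ : ℤ) : ℂ) * w τ u) ∧
    (∀ τ : Fin k → Fin n,
      LinearIndependent ℂ (fun l : {l : Fin k // l ≠ 0} => fun i => b (τ l.1) i) →
      ∀ u ∈ C, ∑ j, w (Function.update τ 0 j) u = 0) := by
  constructor
  · intro σ τ u _
    rw [hw, hw]
    have hdet : Matrix.det (Matrix.of fun i l : Fin k => b ((τ ∘ σ) l) i)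
        = ((Equiv.Perm.sign σ : ℤ) : ℂ)
          * Matrix.det (Matrix.of fun i l : Fin k => b (τ l) i) := by
      have := Matrix.det_permute' σ (Matrix.of fun i l : Fin k => b (τ l) i)
      simpa [Matrix.submatrix, Function.comp] using this
    have hprod : (∏ l, a ((τ ∘ σ) l) / f u ((τ ∘ σ) l))
        = ∏ l, a (τ l) / f u (τ l) :=
      Equiv.prod_comp σ (fun m => a (τ m) / f u (τ m))
    rw [hdet, hprod]; ring
  · intro τ _ u hu
    rw [hC] at hu
    obtain ⟨hne, hcrit⟩ := hu
    -- rows of the matrix for `update τ 0 j`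
    have hrow : ∀ j : Fin n,
        (fun l i : Fin k => b (Function.update τ 0 j l) i)
          = Function.update (fun l i => b (τ l) i) 0 (b j) := by
      intro j; funext l
      by_cases h : l = 0
      · subst h; simp
      · simp [h]
    -- det as alternating map on rows via transpose
    have hdet : ∀ j : Fin n,
        Matrix.det (Matrix.of fun i l : Fin k => b (Function.update τ 0 j l) i)
          = Matrix.detRowAlternating
              ((Function.update (fun l i => b (τ l) i) 0 (b j))) := by
      intro j
      rw [← Matrix.det_transpose]
      exact congrArg Matrix.detRowAlternating (hrow j)
    have hprod : ∀ j : Fin n,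
        (∏ l, a (Function.update τ 0 j l) / f u (Function.update τ 0 j l))
          = (a j / f u j) * ∏ l ∈ Finset.univ.erase 0,
              a (τ l) / f u (τ l) := by
      intro j
      rw [← Finset.mul_prod_erase Finset.univ _ (Finset.mem_univ (0 : Fin k))]
      simp only [Function.update_self]
      congr 1
      apply Finset.prod_congr rfl
      intro l hl
      rw [Function.update_of_ne (Finset.ne_of_mem_erase hl)]
    have key : ∑ j, Matrix.detRowAlternating
        ((Function.update (fun l i => b (τ l) i) 0 (b j))) * (a j / f u j)
        = 0 := by
      have smul : ∀ j : Fin n,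
          Matrix.detRowAlternating
            ((Function.update (fun l i => b (τ l) i) 0 (b j)))
              * (a j / f u j)
          = Matrix.detRowAlternating
            ((Function.update (fun l i => b (τ l) i) 0
              ((a j / f u j) • b j))) := by
        intro j
        have := (Matrix.detRowAlternating :
            (Fin k → ℂ) [⋀^Fin k]→ₗ[ℂ] ℂ).toMultilinearMap.map_update_smul
            (fun l i => b (τ l) i) 0 (a j / f u j) (b j)
        simp only [smul_eq_mul, AlternatingMap.coe_multilinearMap] at this
        rw [mul_comm]
        exact this.symm
      rw [Finset.sum_congr rfl fun j _ => smul j]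
      have := ((Matrix.detRowAlternating :
          (Fin k → ℂ) [⋀^Fin k]→ₗ[ℂ] ℂ).toMultilinearMap.map_update_sum
          Finset.univ 0 (fun j => (a j / f u j) • b j)
          (fun l i => b (τ l) i)).symm
      simp only [AlternatingMap.coe_multilinearMap] at this
      rw [this]
      have hzero : (∑ j, (a j / f u j) • b j) = (0 : Fin k → ℂ) := by
        funext i
        have := hcrit i
        simpa [Finset.sum_apply, mul_comm] using this
      rw [hzero]
      exact (Matrix.detRowAlternating :
        (Fin k → ℂ) [⋀^Fin k]→ₗ[ℂ] ℂ).toMultilinearMap.map_update_zero _ _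
    calc ∑ j, w (Function.update τ 0 j) u
        = ∑ j, (Matrix.detRowAlternating
            ((Function.update (fun l i => b (τ l) i) 0 (b j)))
            * (a j / f u j))
            * ∏ l ∈ Finset.univ.erase 0, a (τ l) / f u (τ l) := by
          apply Finset.sum_congr rfl
          intro j _
          rw [hw, hdet, hprod]; ring
      _ = (∑ j, Matrix.detRowAlternating
            ((Function.update (fun l i => b (τ l) i) 0 (b j)))
            * (a j / f u j))
            * ∏ l ∈ Finset.univ.erase 0, a (τ l) / f u (τ l) := by
          rw [Finset.sum_mul]
      _ = 0 := by rw [key, zero_mul]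
end
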